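/- Let X be a real Banach space with dim X ≥ 2, p > 1, F(x) = (1/p)‖x‖^p, j_p : X → X* a selection of the duality mapping, and let φ : [0,∞) → [0,∞) be nondecreasing with φ(τ) > 0 for τ > 0. Suppose (d): there exist C, c > 0 such that for all x ≠ 0 and all y ∈ X with ‖x−y‖ ≤ c‖x‖ one has Δ_F^{j_p(x)}(y,x) ≥ C‖x‖^p φ(‖x−y‖/‖x‖). Then (e): there exists C' > 0 such that for all x ≠ 0 and all y ∈ X, Δ_F^{j_p(x)}(y,x) ≥ C'·max{‖x‖,‖y‖}^p · φ(‖x−y‖/max{‖x‖,‖y‖}); and consequently (f): there exists C'' > 0 such that for all x ≠ 0 and all y ∈ X, Δ^sym(x,y) ≥ C''·max{‖x‖,‖y‖}^p · φ(‖x−y‖/max{‖x‖,‖y‖}). -/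

import Mathlib

open scoped ENNReal

/-- The modulus of smoothness of a normed space `Y`:
`ρ_Y(τ) = sup {(‖x+τy‖+‖x−τy‖)/2 − 1 : x, y ∈ S_Y}`. -/
noncomputable def rhoSpace (Y : Type*) [NormedAddCommGroup Y] [NormedSpace ℝ Y] (τ : ℝ) : ℝ :=
  sSup {r : ℝ | ∃ x y : Y, ‖x‖ = 1 ∧ ‖y‖ = 1 ∧ r = (‖x + τ • y‖ + ‖x - τ • y‖) / 2 - 1}

/-- The modulus of convexity of a normed space `Y`:
`δ_Y(ε) = inf {1 − ‖y+ỹ‖/2 : y, ỹ ∈ S_Y, ‖y−ỹ‖ = ε}`. -/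
noncomputable def deltaSpace (Y : Type*) [NormedAddCommGroup Y] [NormedSpace ℝ Y] (ε : ℝ) : ℝ :=
  sInf {r : ℝ | ∃ y z : Y, ‖y‖ = 1 ∧ ‖z‖ = 1 ∧ ‖y - z‖ = ε ∧ r = 1 - ‖y + z‖ / 2}

/-- `φ` is a subgradient of `F` at `x`: `F(y) ≥ F(x) + ⟨φ, y−x⟩` for all `y`. -/
def IsSubgradient {X : Type*} [NormedAddCommGroup X] [NormedSpace ℝ X]
    (F : X → ℝ) (x : X) (φ : X →L[ℝ] ℝ) : Prop :=
  ∀ y : X, F x + φ (y - x) ≤ F y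

/-- The linearization error (Bregman divergence)
`Δ_F^{φ}(y,x) = F(y) − F(x) − ⟨φ, y−x⟩`. -/
def breg {X : Type*} [NormedAddCommGroup X] [NormedSpace ℝ X]
    (F : X → ℝ) (φ : X →L[ℝ] ℝ) (y x : X) : ℝ :=
  F y - F x - φ (y - x)

/-- The modulus of smoothness of `F` at `x` w.r.t. `φ`, with values in `[0,∞]`:
`ρ_{F,x}^{φ}(τ) = sup {|Δ_F^{φ}(y,x)| : ‖y−x‖ = τ}`. -/
noncomputable def rhoF {X : Type*} [NormedAddCommGroup X] [NormedSpace ℝ X]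
    (F : X → ℝ) (x : X) (φ : X →L[ℝ] ℝ) (τ : ℝ) : ℝ≥0∞ :=
  ⨆ y ∈ {y : X | ‖y - x‖ = τ}, ENNReal.ofReal |breg F φ y x|

/-- The modulus of convexity of `F` at `x` w.r.t. `φ`, with values in `[0,∞]`:
`δ_{F,x}^{φ}(τ) = inf {|Δ_F^{φ}(y,x)| : ‖y−x‖ = τ}`. -/
noncomputable def deltaF {X : Type*} [NormedAddCommGroup X] [NormedSpace ℝ X]
    (F : X → ℝ) (x : X) (φ : X →L[ℝ] ℝ) (τ : ℝ) : ℝ≥0∞ :=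
  ⨅ y ∈ {y : X | ‖y - x‖ = τ}, ENNReal.ofReal |breg F φ y x|

/-- `jp` is a selection of the duality mapping with exponent `p`:
`⟨j_p(x), x⟩ = ‖j_p(x)‖·‖x‖` and `‖j_p(x)‖ = ‖x‖^{p−1}` for every `x`. -/
def IsDualitySelection {X : Type*} [NormedAddCommGroup X] [NormedSpace ℝ X]
    (p : ℝ) (jp : X → X →L[ℝ] ℝ) : Prop :=
  ∀ x : X, jp x x = ‖jp x‖ * ‖x‖ ∧ ‖jp x‖ = ‖x‖ ^ (p - 1)

/-!
The Bregman divergence `D(y, x)` of `F = ‖·‖^p / p` is convex in `y` and vanishes at `y = x`,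
so it grows at least linearly along the segment from `x` to `y`; hence the local bound (d) at
distance `c‖x‖` gives `D(y, x) ≥ C ‖x‖^p φ(min (‖x - y‖ / ‖x‖) c)` for every `y`. When `‖y‖` is
comparable to `‖x‖` this is already (e), because `‖x - y‖ / max ‖x‖ ‖y‖ ≤ 2` and `φ` is monotone.
When `‖y‖ ≫ ‖x‖`, the bound `⟨j_p(x), y⟩ ≤ ‖x‖^{p-1} ‖y‖` gives `D(y, x) ≥ ‖y‖^p / (2p)` directly.
Finally (f) follows from (e) because `D ≥ 0` by Young's inequality.
-/

open Set

lemma Real.rpow_sub_one_mul_le {p : ℝ} (hp : 1 < p) {a b : ℝ} (ha : 0 ≤ a) (hb : 0 ≤ b) :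
    a ^ (p - 1) * b ≤ (1 - 1 / p) * a ^ p + 1 / p * b ^ p := by
  have hp0 : p ≠ 0 := by positivity
  have h := Real.geom_mean_le_arith_mean2_weighted (w₁ := 1 - 1 / p) (w₂ := 1 / p)
    (by rw [sub_nonneg, div_le_one (by positivity)]; exact hp.le) (by positivity)
    (Real.rpow_nonneg ha p) (Real.rpow_nonneg hb p) (by ring)
  rwa [← Real.rpow_mul ha, ← Real.rpow_mul hb, mul_one_div_cancel hp0, Real.rpow_one,
    mul_sub, mul_one, mul_one_div_cancel hp0] at h

lemma convexOn_norm_rpow {X : Type*} [NormedAddCommGroup X] [NormedSpace ℝ X] {p : ℝ}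
    (hp : 1 ≤ p) : ConvexOn ℝ univ (fun z : X => ‖z‖ ^ p) := by
  refine ⟨convex_univ, fun x _ y _ a b ha hb hab => ?_⟩
  calc ‖a • x + b • y‖ ^ p ≤ (a • ‖x‖ + b • ‖y‖) ^ p := by
        gcongr
        exact (convexOn_norm convex_univ).2 trivial trivial ha hb hab
    _ ≤ a • ‖x‖ ^ p + b • ‖y‖ ^ p :=
        (convexOn_rpow hp).2 (norm_nonneg x) (norm_nonneg y) ha hb hab

section Bregman

variable {X : Type*} [NormedAddCommGroup X] [NormedSpace ℝ X]

lemma IsSubgradient.breg_nonneg {F : X → ℝ} {x : X} {g : X →L[ℝ] ℝ} (hg : IsSubgradient F x g)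
    (y : X) : 0 ≤ breg F g y x := by
  have := hg y
  unfold breg
  linarith

lemma breg_add_smul_sub_le {F : X → ℝ} (hF : ConvexOn ℝ univ F) (g : X →L[ℝ] ℝ) (x y : X)
    {l : ℝ} (hl₀ : 0 ≤ l) (hl₁ : l ≤ 1) :
    breg F g (x + l • (y - x)) x ≤ l * breg F g y x := by
  have hconv := hF.2 (mem_univ x) (mem_univ y) (sub_nonneg.2 hl₁) hl₀ (sub_add_cancel 1 l)
  rw [show (1 - l) • x + l • y = x + l • (y - x) by module, smul_eq_mul, smul_eq_mul] at hconv
  simp only [breg, add_sub_cancel_left, map_smul, smul_eq_mul]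
  linarith

/-- Move `y` towards `x` until it reaches distance `r`; by convexity this scales the divergence
down by the factor `r / ‖x - y‖ ≤ 1`. -/
lemma IsSubgradient.le_breg_of_le_breg_of_norm_sub_le {F : X → ℝ} (hF : ConvexOn ℝ univ F)
    {x : X} {g : X →L[ℝ] ℝ} (hg : IsSubgradient F x g) {r : ℝ} (hr : 0 ≤ r) {ψ : ℝ → ℝ}
    (hψ : ∀ y, ‖x - y‖ ≤ r → ψ ‖x - y‖ ≤ breg F g y x) (y : X) :
    ψ (min ‖x - y‖ r) ≤ breg F g y x := by
  rcases le_or_gt ‖x - y‖ r with hle | hlt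
  · rw [min_eq_left hle]
    exact hψ y hle
  have hpos : 0 < ‖x - y‖ := hr.trans_lt hlt
  set l := r / ‖x - y‖
  have hl₁ : l ≤ 1 := (div_le_one hpos).2 hlt.le
  have hdist : ‖x - (x + l • (y - x))‖ = r := by
    rw [sub_add_cancel_left, norm_neg, norm_smul, Real.norm_of_nonneg (by positivity),
      norm_sub_rev, div_mul_cancel₀ _ hpos.ne']
  calc ψ (min ‖x - y‖ r) = ψ ‖x - (x + l • (y - x))‖ := by rw [min_eq_right hlt.le, hdist]
    _ ≤ breg F g (x + l • (y - x)) x := hψ _ hdist.le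
    _ ≤ l * breg F g y x := breg_add_smul_sub_le hF g x y (by positivity) hl₁
    _ ≤ breg F g y x := mul_le_of_le_one_left (hg.breg_nonneg y) hl₁

end Bregman

namespace IsDualitySelection

variable {X : Type*} [NormedAddCommGroup X] [NormedSpace ℝ X] {p : ℝ} {jp : X → X →L[ℝ] ℝ}

lemma apply_self (hjp : IsDualitySelection p jp) (hp : p ≠ 0) (x : X) : jp x x = ‖x‖ ^ p := by
  rw [(hjp x).1, (hjp x).2, ← Real.rpow_add_one' (norm_nonneg x) (by simpa using hp),
    sub_add_cancel]

lemma apply_le (hjp : IsDualitySelection p jp) (x y : X) : jp x y ≤ ‖x‖ ^ (p - 1) * ‖y‖ := by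
  rw [← (hjp x).2]
  exact (le_abs_self _).trans ((jp x).le_opNorm y)

lemma le_breg (hjp : IsDualitySelection p jp) (hp : p ≠ 0) (x y : X) :
    1 / p * ‖y‖ ^ p + (1 - 1 / p) * ‖x‖ ^ p - ‖x‖ ^ (p - 1) * ‖y‖ ≤
      breg (fun z : X => 1 / p * ‖z‖ ^ p) (jp x) y x := by
  have := hjp.apply_le x y
  simp only [breg, map_sub, hjp.apply_self hp]
  linarith

lemma isSubgradient (hjp : IsDualitySelection p jp) (hp : 1 < p) (x : X) :
    IsSubgradient (fun z : X => 1 / p * ‖z‖ ^ p) x (jp x) := by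
  intro y
  have := hjp.le_breg (by positivity) x y
  have := Real.rpow_sub_one_mul_le hp (norm_nonneg x) (norm_nonneg y)
  unfold breg at *
  linarith

lemma div_le_breg_of_mul_rpow_le (hjp : IsDualitySelection p jp) (hp : 1 < p) {x y : X}
    (hxy : 2 * p * ‖x‖ ^ (p - 1) ≤ ‖y‖ ^ (p - 1)) :
    ‖y‖ ^ p / (2 * p) ≤ breg (fun z : X => 1 / p * ‖z‖ ^ p) (jp x) y x := by
  have hp0 : 0 < p := by linarith
  have hcross : ‖x‖ ^ (p - 1) * ‖y‖ ≤ ‖y‖ ^ p / (2 * p) := by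
    -- `‖y‖ ^ p = ‖y‖ ^ (p - 1) * ‖y‖`, read off the duality selection at `y`
    rw [← hjp.apply_self hp0.ne' y, (hjp y).1, (hjp y).2, le_div_iff₀ (by positivity)]
    nlinarith [norm_nonneg y]
  have := hjp.le_breg hp0.ne' x y
  have : 0 ≤ (1 - 1 / p) * ‖x‖ ^ p :=
    mul_nonneg (by rw [sub_nonneg, div_le_one hp0]; exact hp.le) (by positivity)
  have : 1 / p * ‖y‖ ^ p = 2 * (‖y‖ ^ p / (2 * p)) := by field_simp
  linarith

end IsDualitySelection

lemma apply_le_max_div_mul_apply_min {φ : ℝ → ℝ} (hφ0 : ∀ τ : ℝ, 0 ≤ τ → 0 ≤ φ τ)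
    (hφmono : ∀ τ₁ τ₂ : ℝ, 0 ≤ τ₁ → τ₁ ≤ τ₂ → φ τ₁ ≤ φ τ₂) {b c s t : ℝ} (hc : 0 < φ c)
    (hs : 0 ≤ s) (hst : s ≤ t) (hsb : s ≤ b) :
    φ s ≤ max 1 (φ b / φ c) * φ (min t c) := by
  rcases le_total t c with htc | hct
  · rw [min_eq_left htc]
    exact (hφmono s t hs hst).trans
      (le_mul_of_one_le_left (hφ0 t (hs.trans hst)) (le_max_left _ _))
  · rw [min_eq_right hct]
    calc φ s ≤ φ b := hφmono s b hs hsb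
      _ = φ b / φ c * φ c := (div_mul_cancel₀ _ hc.ne').symm
      _ ≤ max 1 (φ b / φ c) * φ c := by gcongr; exact le_max_right _ _

lemma norm_sub_div_max_le_two {E : Type*} [SeminormedAddCommGroup E] (x y : E) :
    ‖x - y‖ / max ‖x‖ ‖y‖ ≤ 2 :=
  div_le_of_le_mul₀ (by positivity) zero_le_two <| by
    linarith [norm_sub_le x y, le_max_left ‖x‖ ‖y‖, le_max_right ‖x‖ ‖y‖]

/-- `M = (2p)^{1/(p-1)}` is chosen so that for `‖y‖ > M ‖x‖` the cross term `⟨j_p(x), y⟩` is at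
most half of `‖y‖^p / p`. -/
theorem exists_mul_max_rpow_le_breg {X : Type*} [NormedAddCommGroup X] [NormedSpace ℝ X]
    {p : ℝ} (hp : 1 < p) {jp : X → X →L[ℝ] ℝ} (hjp : IsDualitySelection p jp) {φ : ℝ → ℝ}
    (hφ0 : ∀ τ : ℝ, 0 ≤ τ → 0 ≤ φ τ) (hφmono : ∀ τ₁ τ₂ : ℝ, 0 ≤ τ₁ → τ₁ ≤ τ₂ → φ τ₁ ≤ φ τ₂)
    (hφpos : ∀ τ : ℝ, 0 < τ → 0 < φ τ) {C c : ℝ} (hC : 0 < C) (hc : 0 < c)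
    (hbound : ∀ x y : X, x ≠ 0 →
      C * ‖x‖ ^ p * φ (min (‖x - y‖ / ‖x‖) c) ≤ breg (fun z : X => 1 / p * ‖z‖ ^ p) (jp x) y x) :
    ∃ C' : ℝ, 0 < C' ∧ ∀ x y : X, x ≠ 0 →
      C' * max ‖x‖ ‖y‖ ^ p * φ (‖x - y‖ / max ‖x‖ ‖y‖) ≤
        breg (fun z : X => 1 / p * ‖z‖ ^ p) (jp x) y x := by
  have hp0 : 0 < p := by linarith
  set M := (2 * p) ^ (p - 1)⁻¹
  have hM : 1 ≤ M := Real.one_le_rpow (by linarith) (inv_nonneg.2 (by linarith))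
  have hMp : M ^ (p - 1) = 2 * p := Real.rpow_inv_rpow (by positivity) (by linarith)
  have hφ2 := hφpos 2 two_pos
  have hφc := hφpos c hc
  set K := max 1 (φ 2 / φ c)
  refine ⟨min (C / (M ^ p * K)) (1 / (2 * p * φ 2)), by positivity, fun x y hx => ?_⟩
  have hx0 : 0 < ‖x‖ := norm_pos_iff.2 hx
  have hs0 : 0 ≤ ‖x - y‖ / max ‖x‖ ‖y‖ := by positivity
  have hs2 := norm_sub_div_max_le_two x y
  have hst : ‖x - y‖ / max ‖x‖ ‖y‖ ≤ ‖x - y‖ / ‖x‖ :=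
    div_le_div_of_nonneg_left (norm_nonneg _) hx0 (le_max_left _ _)
  have hφs : 0 ≤ φ (‖x - y‖ / max ‖x‖ ‖y‖) := hφ0 _ hs0
  rcases le_or_gt ‖y‖ (M * ‖x‖) with hy | hy
  · have hmax : max ‖x‖ ‖y‖ ^ p ≤ M ^ p * ‖x‖ ^ p := by
      rw [← Real.mul_rpow (by positivity) hx0.le]
      gcongr
      exact max_le (le_mul_of_one_le_left hx0.le hM) hy
    have hK : 0 < K := one_pos.trans_le (le_max_left _ _)
    have hC' : min (C / (M ^ p * K)) (1 / (2 * p * φ 2)) ≤ C / (M ^ p * K) := min_le_left _ _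
    have hφK := apply_le_max_div_mul_apply_min hφ0 hφmono hφc hs0 hst hs2
    calc _ ≤ C / (M ^ p * K) * (M ^ p * ‖x‖ ^ p) * (K * φ (min (‖x - y‖ / ‖x‖) c)) := by
          gcongr
      _ = C * ‖x‖ ^ p * φ (min (‖x - y‖ / ‖x‖) c) := by field_simp
      _ ≤ _ := hbound x y hx
  · have hmax : max ‖x‖ ‖y‖ = ‖y‖ :=
      max_eq_right ((le_mul_of_one_le_left hx0.le hM).trans hy.le)
    have hlarge : 2 * p * ‖x‖ ^ (p - 1) ≤ ‖y‖ ^ (p - 1) := by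
      rw [← hMp, ← Real.mul_rpow (by positivity) hx0.le]
      gcongr
    have hC' : min (C / (M ^ p * K)) (1 / (2 * p * φ 2)) ≤ 1 / (2 * p * φ 2) := min_le_right _ _
    rw [hmax] at hs2 hs0 hφs ⊢
    have hφ2s := hφmono _ _ hs0 hs2
    calc _ ≤ 1 / (2 * p * φ 2) * ‖y‖ ^ p * φ 2 := by gcongr
      _ = ‖y‖ ^ p / (2 * p) := by field_simp
      _ ≤ _ := hjp.div_le_breg_of_mul_rpow_le hp hlarge

theorem stmt15_general (X : Type*) [NormedAddCommGroup X] [NormedSpace ℝ X]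
    (p : ℝ) (hp : 1 < p)
    (jp : X → X →L[ℝ] ℝ) (hjp : IsDualitySelection p jp)
    (φ : ℝ → ℝ)
    (hφ0 : ∀ τ : ℝ, 0 ≤ τ → 0 ≤ φ τ)
    (hφmono : ∀ τ₁ τ₂ : ℝ, 0 ≤ τ₁ → τ₁ ≤ τ₂ → φ τ₁ ≤ φ τ₂)
    (hφpos : ∀ τ : ℝ, 0 < τ → 0 < φ τ)
    (hd : ∃ C c : ℝ, 0 < C ∧ 0 < c ∧
      ∀ x y : X, x ≠ 0 → ‖x - y‖ ≤ c * ‖x‖ →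
        C * ‖x‖ ^ p * φ (‖x - y‖ / ‖x‖) ≤
          breg (fun z : X => (1 / p) * ‖z‖ ^ p) (jp x) y x) :
    (∃ C' : ℝ, 0 < C' ∧ ∀ x y : X, x ≠ 0 →
      C' * max ‖x‖ ‖y‖ ^ p * φ (‖x - y‖ / max ‖x‖ ‖y‖) ≤
        breg (fun z : X => (1 / p) * ‖z‖ ^ p) (jp x) y x) ∧
    (∃ C'' : ℝ, 0 < C'' ∧ ∀ x y : X, x ≠ 0 →
      C'' * max ‖x‖ ‖y‖ ^ p * φ (‖x - y‖ / max ‖x‖ ‖y‖) ≤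
        breg (fun z : X => (1 / p) * ‖z‖ ^ p) (jp x) y x +
          breg (fun z : X => (1 / p) * ‖z‖ ^ p) (jp y) x y) := by
  obtain ⟨C, c, hC, hc, hd⟩ := hd
  have hF : ConvexOn ℝ univ (fun z : X => 1 / p * ‖z‖ ^ p) :=
    (convexOn_norm_rpow hp.le).smul (by positivity)
  have hbound : ∀ x y : X, x ≠ 0 →
      C * ‖x‖ ^ p * φ (min (‖x - y‖ / ‖x‖) c) ≤ breg (fun z : X => 1 / p * ‖z‖ ^ p) (jp x) y x := by
    intro x y hx
    have hx0 : 0 < ‖x‖ := norm_pos_iff.2 hx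
    have := (hjp.isSubgradient hp x).le_breg_of_le_breg_of_norm_sub_le hF (r := c * ‖x‖)
      (ψ := fun τ => C * ‖x‖ ^ p * φ (τ / ‖x‖)) (by positivity) (hd x · hx) y
    rwa [← min_div_div_right hx0.le, mul_div_cancel_right₀ c hx0.ne'] at this
  obtain ⟨C', hC', he⟩ := exists_mul_max_rpow_le_breg hp hjp hφ0 hφmono hφpos hC hc hbound
  refine ⟨⟨C', hC', he⟩, C', hC', fun x y hx => ?_⟩
  linarith [he x y hx, (hjp.isSubgradient hp y).breg_nonneg x]

/-- for `F = (1/p)‖·‖^p` and a nondecreasing `φ : [0,∞) → [0,∞)` positive on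
`(0,∞)`, condition (d) implies (e) (uniform lower bound on the Bregman divergence) and (f)
(lower bound on the symmetric Bregman divergence). -/
theorem stmt15 (X : Type*) [NormedAddCommGroup X] [NormedSpace ℝ X] [CompleteSpace X]
    (hdim : 2 ≤ Module.rank ℝ X)
    (p : ℝ) (hp : 1 < p)
    (jp : X → X →L[ℝ] ℝ) (hjp : IsDualitySelection p jp)
    (φ : ℝ → ℝ)
    (hφ0 : ∀ τ : ℝ, 0 ≤ τ → 0 ≤ φ τ)
    (hφmono : ∀ τ₁ τ₂ : ℝ, 0 ≤ τ₁ → τ₁ ≤ τ₂ → φ τ₁ ≤ φ τ₂)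
    (hφpos : ∀ τ : ℝ, 0 < τ → 0 < φ τ)
    (hd : ∃ C c : ℝ, 0 < C ∧ 0 < c ∧
      ∀ x y : X, x ≠ 0 → ‖x - y‖ ≤ c * ‖x‖ →
        C * ‖x‖ ^ p * φ (‖x - y‖ / ‖x‖) ≤
          breg (fun z : X => (1 / p) * ‖z‖ ^ p) (jp x) y x) :
    (∃ C' : ℝ, 0 < C' ∧ ∀ x y : X, x ≠ 0 →
      C' * max ‖x‖ ‖y‖ ^ p * φ (‖x - y‖ / max ‖x‖ ‖y‖) ≤
        breg (fun z : X => (1 / p) * ‖z‖ ^ p) (jp x) y x) ∧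
    (∃ C'' : ℝ, 0 < C'' ∧ ∀ x y : X, x ≠ 0 →
      C'' * max ‖x‖ ‖y‖ ^ p * φ (‖x - y‖ / max ‖x‖ ‖y‖) ≤
        breg (fun z : X => (1 / p) * ‖z‖ ^ p) (jp x) y x +
          breg (fun z : X => (1 / p) * ‖z‖ ^ p) (jp y) x y) :=
  stmt15_general X p hp jp hjp φ hφ0 hφmono hφpos hd
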